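/- arXiv:2404.17734 — 2 statements merged into one kernel-verified Lean document; each statement's English description precedes it below -/
import Mathlib

section
/- Suppose each unit's treatment effect r_{d=1,ij} - r_{d=0,ij} lies in [K0, K1]. Then the sample average treatment effect κ = (1/N) Σ_ij (r_{d=1,ij} - r_{d=0,ij}) satisfies LB ≤ κ ≤ UB, where LB = (1/N) Σ_ij (r_Tij - r_Cij) - K0·(1/N) Σ_ij (d_Tij - d_Cij) + K0 and UB = (1/N) Σ_ij (r_Tij - r_Cij) - K1·(1/N) Σ_ij (d_Tij - d_Cij) + K1. -/
/-!
Write `c = d_T - d_C` for a unit's compliance and `τ = r_{d=1} - r_{d=0}` for its effect, so that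
by the exclusion restriction its intention-to-treat effect is `c τ`. Since `c ≤ 1`, the gap
`τ - (c τ + (1 - c) K) = (1 - c) (τ - K)` has the sign of `τ - K`; hence
`c τ + (1 - c) K₀ ≤ τ ≤ c τ + (1 - c) K₁` unit by unit, and averaging over the units gives the bounds.
-/

open Finset

lemma mul_add_one_sub_mul_le {c τ K : ℝ} (hc : c ≤ 1) (hK : K ≤ τ) :
    c * τ + (1 - c) * K ≤ τ := by
  nlinarith

lemma le_mul_add_one_sub_mul {c τ K : ℝ} (hc : c ≤ 1) (hK : τ ≤ K) :
    τ ≤ c * τ + (1 - c) * K := by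
  nlinarith

lemma average_add_one_sub_mul {ι : Type*} [Fintype ι] [Nonempty ι] (f c : ι → ℝ) (K : ℝ) :
    (1 / Fintype.card ι : ℝ) * ∑ i, (f i + (1 - c i) * K)
      = (1 / Fintype.card ι : ℝ) * ∑ i, f i
          - K * ((1 / Fintype.card ι : ℝ) * ∑ i, c i) + K := by
  have hcard : (Fintype.card ι : ℝ) ≠ 0 := by positivity
  simp only [sum_add_distrib, sub_mul, sum_sub_distrib, sum_const, card_univ, nsmul_eq_mul,
    one_mul, ← sum_mul]
  field_simp
  ring

theorem sate_partial_identification_bounds_general {N : ℕ} (hN : 0 < N)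
    (dT dC : Fin N → ℝ) (rT rC rd1 rd0 : Fin N → ℝ) (K0 K1 : ℝ)
    (hT : ∀ ij, dT ij = 0 ∨ dT ij = 1) (hC : ∀ ij, dC ij = 0 ∨ dC ij = 1)
    (heff : ∀ ij, K0 ≤ rd1 ij - rd0 ij ∧ rd1 ij - rd0 ij ≤ K1)
    (hexcl : ∀ ij, rT ij - rC ij = (dT ij - dC ij) * (rd1 ij - rd0 ij)) :
    ((1 : ℝ) / N) * ∑ ij, (rT ij - rC ij)
        - K0 * (((1 : ℝ) / N) * ∑ ij, (dT ij - dC ij)) + K0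
      ≤ ((1 : ℝ) / N) * ∑ ij, (rd1 ij - rd0 ij) ∧
    ((1 : ℝ) / N) * ∑ ij, (rd1 ij - rd0 ij)
      ≤ ((1 : ℝ) / N) * ∑ ij, (rT ij - rC ij)
        - K1 * (((1 : ℝ) / N) * ∑ ij, (dT ij - dC ij)) + K1 := by
  have : NeZero N := ⟨hN.ne'⟩
  have hc : ∀ ij, dT ij - dC ij ≤ 1 := fun ij => by
    rcases hT ij with h | h <;> rcases hC ij with h' | h' <;> simp [h, h']
  have average_le {f g : Fin N → ℝ} (hfg : ∀ ij, f ij ≤ g ij) :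
      (1 / N : ℝ) * ∑ ij, f ij ≤ (1 / N : ℝ) * ∑ ij, g ij :=
    mul_le_mul_of_nonneg_left (sum_le_sum fun ij _ => hfg ij) (by positivity)
  have hK (K : ℝ) := average_add_one_sub_mul (fun ij => rT ij - rC ij) (fun ij => dT ij - dC ij) K
  simp only [Fintype.card_fin] at hK
  rw [← hK, ← hK]
  constructor <;> apply average_le <;> intro ij <;> rw [hexcl]
  · exact mul_add_one_sub_mul_le (hc ij) (heff ij).1
  · exact le_mul_add_one_sub_mul (hc ij) (heff ij).2

/-- Partial identification bounds for the sample average treatment effect. -/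
theorem sate_partial_identification_bounds {N : ℕ} (hN : 0 < N)
    (dT dC : Fin N → ℝ) (rT rC rd1 rd0 : Fin N → ℝ) (K0 K1 : ℝ)
    (hK : K0 ≤ K1)
    (hT : ∀ ij, dT ij = 0 ∨ dT ij = 1) (hC : ∀ ij, dC ij = 0 ∨ dC ij = 1)
    (hmono : ∀ ij, dC ij ≤ dT ij)
    (heff : ∀ ij, K0 ≤ rd1 ij - rd0 ij ∧ rd1 ij - rd0 ij ≤ K1)
    (hexcl : ∀ ij, rT ij - rC ij = (dT ij - dC ij) * (rd1 ij - rd0 ij)) :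
    ((1 : ℝ) / N) * ∑ ij, (rT ij - rC ij)
        - K0 * (((1 : ℝ) / N) * ∑ ij, (dT ij - dC ij)) + K0
      ≤ ((1 : ℝ) / N) * ∑ ij, (rd1 ij - rd0 ij) ∧
    ((1 : ℝ) / N) * ∑ ij, (rd1 ij - rd0 ij)
      ≤ ((1 : ℝ) / N) * ∑ ij, (rT ij - rC ij)
        - K1 * (((1 : ℝ) / N) * ∑ ij, (dT ij - dC ij)) + K1 :=
  sate_partial_identification_bounds_general hN dT dC rT rC rd1 rd0 K0 K1 hT hC heff hexcl
end

section
/- For a matched-pair design, the expectation of the classical variance estimator S² = (1/(I(I-1))) Σ_i (τ̂_i - τ̄)², where τ̂_i = τ_i + ε_i with fixed unit effects τ_i and independent ε_i taking values ±e_i each with probability 1/2, and τ̄ = (1/I) Σ_i τ̂_i, equals Var(τ̄) + (1/(I(I-1))) Σ_i (τ_i - τ̄₀)² where τ̄₀ = (1/I) Σ_i τ_i; hence E[S²] ≥ Var(τ̄) with equality iff all τ_i are equal. -/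
/-!
Write `ε_i(z) = ±e_i` for the sign vector `z`. The identity
`∑ (x_i - x̄)² = ∑ x_i² - (∑ x_i)² / I` reduces `E[S²]` to the first two moments of `ε`:
`E ε_i = 0` and `E ε_i ε_j = δ_ij e_i²`, both because flipping the `i`-th sign negates the
summand. Hence `E ∑ τ̂_i² = ∑ τ_i² + ∑ e_i²` and `E (∑ τ̂_i)² = (∑ τ_i)² + ∑ e_i²`, so
`E ∑ (τ̂_i - τ̄)² = ∑ (τ_i - τ̄₀)² + (1 - 1/I) ∑ e_i²`.
-/

open Finset

lemma sum_sq_add_of_sum_eq_zero {α : Type*} [Fintype α] (a : ℝ) {X : α → ℝ}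
    (hX : ∑ z, X z = 0) : ∑ z, (a + X z) ^ 2 = Fintype.card α * a ^ 2 + ∑ z, X z ^ 2 := by
  simp only [add_sq, sum_add_distrib, ← mul_sum, hX, sum_const, card_univ, nsmul_eq_mul]
  ring

section Mean

variable {ι : Type*} [Fintype ι]

lemma sum_sub_mean_sq (x : ι → ℝ) :
    ∑ i, (x i - 1 / Fintype.card ι * ∑ j, x j) ^ 2
      = ∑ i, x i ^ 2 - (∑ i, x i) ^ 2 / Fintype.card ι := by
  rcases isEmpty_or_nonempty ι with hι | hι
  · simp
  have hn : (Fintype.card ι : ℝ) ≠ 0 := by positivity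
  simp only [sub_sq, sum_add_distrib, sum_sub_distrib, ← sum_mul, ← mul_sum, sum_const, card_univ,
    nsmul_eq_mul]
  field_simp
  ring

lemma sum_sub_mean_sq_eq_zero_iff (x : ι → ℝ) :
    ∑ i, (x i - 1 / Fintype.card ι * ∑ j, x j) ^ 2 = 0 ↔ ∀ i j, x i = x j := by
  rw [sum_eq_zero_iff_of_nonneg fun i _ => sq_nonneg _]
  simp only [mem_univ, true_implies, pow_eq_zero_iff two_ne_zero, sub_eq_zero]
  constructor
  · intro h i j
    rw [h i, h j]
  · intro h i
    have : Nonempty ι := ⟨i⟩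
    have hn : (Fintype.card ι : ℝ) ≠ 0 := by positivity
    rw [sum_congr rfl fun j _ => h j i, sum_const, card_univ, nsmul_eq_mul]
    field_simp

end Mean

section SignVectors

variable {ι : Type*}

def flipAt [DecidableEq ι] (i : ι) (z : ι → Bool) : ι → Bool := Function.update z i (!z i)

lemma flipAt_involutive [DecidableEq ι] (i : ι) : Function.Involutive (flipAt i) := fun z => by
  simp [flipAt]

/-- The value `ε_i = ±e_i` taken under the sign vector `z`. -/
def signed (e : ι → ℝ) (z : ι → Bool) (i : ι) : ℝ := if z i then e i else -e i

variable (e : ι → ℝ)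

lemma signed_sq (z : ι → Bool) (i : ι) : signed e z i ^ 2 = e i ^ 2 := by
  unfold signed
  split_ifs <;> simp

lemma signed_flipAt_self [DecidableEq ι] (z : ι → Bool) (i : ι) :
    signed e (flipAt i z) i = -signed e z i := by
  unfold signed flipAt
  cases z i <;> simp

lemma signed_flipAt_of_ne [DecidableEq ι] (z : ι → Bool) {i j : ι} (h : j ≠ i) :
    signed e (flipAt i z) j = signed e z j := by
  simp [signed, flipAt, Function.update_of_ne h]

variable [Fintype ι] [DecidableEq ι]

lemma sum_eq_zero_of_flipAt {f : (ι → Bool) → ℝ} (i : ι) (hf : ∀ z, f (flipAt i z) = -f z) :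
    ∑ z, f z = 0 := by
  have h := Equiv.sum_comp (flipAt_involutive i).toPerm f
  simp only [Function.Involutive.coe_toPerm, hf, sum_neg_distrib] at h
  linarith

lemma sum_signed (i : ι) : ∑ z, signed e z i = 0 :=
  sum_eq_zero_of_flipAt i fun z => signed_flipAt_self e z i

lemma sum_signed_mul_signed (i j : ι) :
    ∑ z, signed e z i * signed e z j = if i = j then 2 ^ Fintype.card ι * e i ^ 2 else 0 := by
  split_ifs with hij
  · subst hij
    simp [← sq, signed_sq, mul_comm]
  · refine sum_eq_zero_of_flipAt i fun z => ?_
    rw [signed_flipAt_self, signed_flipAt_of_ne e z (Ne.symm hij), neg_mul]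

lemma sum_sq_sum_signed :
    ∑ z, (∑ i, signed e z i) ^ 2 = 2 ^ Fintype.card ι * ∑ i, e i ^ 2 := by
  simp_rw [sq, sum_mul_sum]
  rw [sum_comm]
  simp_rw [sum_comm (γ := ι → Bool), sum_signed_mul_signed, sum_ite_eq, mem_univ, if_true, mul_sum,
    sq]

lemma sum_sum_sq_sub_mean_add_signed (τ : ι → ℝ) :
    ∑ z, ∑ i, (τ i + signed e z i - 1 / Fintype.card ι * ∑ j, (τ j + signed e z j)) ^ 2
      = 2 ^ Fintype.card ι * (∑ i, (τ i - 1 / Fintype.card ι * ∑ j, τ j) ^ 2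
          + (1 - 1 / Fintype.card ι) * ∑ i, e i ^ 2) := by
  have h_sum_sq : ∑ z, ∑ i, (τ i + signed e z i) ^ 2
      = 2 ^ Fintype.card ι * (∑ i, τ i ^ 2 + ∑ i, e i ^ 2) := by
    rw [sum_comm]
    simp_rw [sum_sq_add_of_sum_eq_zero _ (sum_signed e _), signed_sq, sum_const, card_univ,
      Fintype.card_fun, Fintype.card_bool, nsmul_eq_mul, sum_add_distrib, mul_add, mul_sum]
    push_cast
    rfl
  have h_sq_sum : ∑ z, (∑ i, (τ i + signed e z i)) ^ 2
      = 2 ^ Fintype.card ι * ((∑ i, τ i) ^ 2 + ∑ i, e i ^ 2) := by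
    have h0 : ∑ z, ∑ i, signed e z i = 0 := by
      rw [sum_comm]
      exact sum_eq_zero fun i _ => sum_signed e i
    simp_rw [sum_add_distrib]
    rw [sum_sq_add_of_sum_eq_zero _ h0, sum_sq_sum_signed, Fintype.card_fun]
    simp only [Fintype.card_bool, Nat.cast_pow, Nat.cast_ofNat]
    ring
  rw [sum_congr rfl fun z _ => sum_sub_mean_sq fun i => τ i + signed e z i, sum_sub_distrib,
    h_sum_sq, ← sum_div, h_sq_sum, sum_sub_mean_sq]
  ring

end SignVectors

/-- Expectation of the classical matched-pair variance estimator: it equals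
`Var(τ̄) + (1/(I(I-1))) Σ (τ_i - τ̄₀)²`, hence overestimates `Var(τ̄)` with
equality iff all unit effects `τ_i` are equal. Expectations are uniform
averages over the `2^I` sign vectors `z : Fin I → Bool`. -/
theorem variance_estimator_expectation (I : ℕ) (hI : 2 ≤ I)
    (τ e : Fin I → ℝ) :
    (let τhat : (Fin I → Bool) → Fin I → ℝ :=
        fun z i => τ i + (if z i then e i else -e i);
     let τbar : (Fin I → Bool) → ℝ := fun z => ((1 : ℝ) / I) * ∑ i, τhat z i;
     let S2 : (Fin I → Bool) → ℝ :=
        fun z => (1 / ((I : ℝ) * (I - 1))) * ∑ i, (τhat z i - τbar z) ^ 2;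
     let ES2 : ℝ := ∑ z : Fin I → Bool, ((1 : ℝ) / 2 ^ I) * S2 z;
     let varτbar : ℝ := ((1 : ℝ) / I ^ 2) * ∑ i, e i ^ 2;
     let τbar0 : ℝ := ((1 : ℝ) / I) * ∑ i, τ i;
     ES2 = varτbar + (1 / ((I : ℝ) * (I - 1))) * ∑ i, (τ i - τbar0) ^ 2 ∧
     varτbar ≤ ES2 ∧
     (ES2 = varτbar ↔ ∀ i j, τ i = τ j)) := by
  intro τhat τbar S2 ES2 varτbar τbar0
  have hI' : (2 : ℝ) ≤ I := by exact_mod_cast hI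
  have hI0 : (I : ℝ) ≠ 0 := by positivity
  have hI1 : (I : ℝ) - 1 ≠ 0 := by linarith
  have hES2 : ES2 = varτbar + 1 / (I * (I - 1)) * ∑ i, (τ i - τbar0) ^ 2 := by
    have h := sum_sum_sq_sub_mean_add_signed e τ
    rw [Fintype.card_fin] at h
    calc ES2 = 1 / 2 ^ I * (1 / (I * (I - 1)) * ∑ z, ∑ i,
          (τ i + signed e z i - 1 / I * ∑ j, (τ j + signed e z j)) ^ 2) := by
          simp only [ES2, S2, ← mul_sum]
          rfl
      _ = varτbar + 1 / (I * (I - 1)) * ∑ i, (τ i - τbar0) ^ 2 := by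
          rw [h]
          simp only [varτbar, τbar0]
          field_simp
          ring
  have hspread : 0 ≤ 1 / (I * (I - 1)) * ∑ i, (τ i - τbar0) ^ 2 := by
    have : (0 : ℝ) ≤ I - 1 := by linarith
    positivity
  refine ⟨hES2, by linarith, ?_⟩
  have hc : 1 / ((I : ℝ) * (I - 1)) ≠ 0 := by positivity
  have h := sum_sub_mean_sq_eq_zero_iff τ
  rw [Fintype.card_fin] at h
  rw [hES2, add_eq_left, mul_eq_zero, or_iff_right hc, h]
end
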